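/- Let (X, 𝓛_X) and (Y, 𝓛_Y) be locally small spaces and f : X → Y a mapping. Then f is bounded and continuous if and only if f is strictly continuous, i.e., for every admissible open family 𝓥 in (Y, 𝓛_Y), the family f⁻¹(𝓥) = {f⁻¹(V) : V ∈ 𝓥} is an admissible open family in (X, 𝓛_X). -/

import Mathlib

open Set

/-- The family of sets compatible with a family `L`:
`L° = {Y : ∀ M ∈ L, Y ∩ M ∈ L}`. -/
def compatible {X : Type*} (L : Set (Set X)) : Set (Set X) :=
  {Y | ∀ M ∈ L, Y ∩ M ∈ L}

/-- The small sets: `Lˢ = {B : ∃ M ∈ L, B ⊆ M}`. -/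
def smalls {X : Type*} (L : Set (Set X)) : Set (Set X) :=
  {B | ∃ M ∈ L, B ⊆ M}

/-- The weakly open sets: `L^wo = {⋃₀ U : U ⊆ L}`. -/
def weaklyOpens {X : Type*} (L : Set (Set X)) : Set (Set X) :=
  {W | ∃ U ⊆ L, W = ⋃₀ U}

/-- `(X, L)` is a locally small space: `∅ ∈ L`, `L` is closed under binary
intersections and unions, and `L` covers `X`. -/
def IsLSS {X : Type*} (L : Set (Set X)) : Prop :=
  ∅ ∈ L ∧ (∀ a ∈ L, ∀ b ∈ L, a ∩ b ∈ L ∧ a ∪ b ∈ L) ∧ ⋃₀ L = Set.univ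

/-- An admissible (locally essentially finite) open family. -/
def Admissible {X : Type*} (L U : Set (Set X)) : Prop :=
  U ⊆ compatible L ∧
    ∀ M ∈ L, ∃ F ⊆ U, F.Finite ∧ (⋃₀ U) ∩ M = (⋃₀ F) ∩ M

/-- `f` is bounded: `𝓛_X` refines `f⁻¹(𝓛_Y)`. -/
def BoundedMap {X Y : Type*} (LX : Set (Set X)) (LY : Set (Set Y)) (f : X → Y) : Prop :=
  ∀ L ∈ LX, ∃ M ∈ LY, L ⊆ f ⁻¹' M

/-- `f` is continuous: preimages of smops are open. -/
def ContinuousMap' {X Y : Type*} (LX : Set (Set X)) (LY : Set (Set Y)) (f : X → Y) : Prop :=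
  ∀ M ∈ LY, f ⁻¹' M ∈ compatible LX

/-!
Both directions are local computations on a small set `L ⊆ f⁻¹(M)`: there `f⁻¹(A) ∩ L` only
depends on `A ∩ M`, which transports openness and local finiteness from `Y` to `X`. Conversely,
`𝓛_Y` itself is an admissible family covering `Y`, so a small `L` meets only finitely many
`f⁻¹(M)`, whose union is the preimage of a small set; and a single small set `{M}` is an admissible
family, so `f⁻¹(M)` is open.
-/

namespace IsLSS

variable {X : Type*} {L : Set (Set X)}

lemma sUnion_mem (hL : IsLSS L) {F : Set (Set X)} (hF : F.Finite) (hFL : F ⊆ L) : ⋃₀ F ∈ L :=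
  SupClosed.sSup_mem (fun a ha b hb => (hL.2.1 a ha b hb).2) hF hL.1 hFL

lemma subset_compatible (hL : IsLSS L) : L ⊆ compatible L :=
  fun _ ha M hM => (hL.2.1 _ ha M hM).1

lemma admissible_self (hL : IsLSS L) : Admissible L L := by
  refine ⟨hL.subset_compatible, fun M hM => ⟨{M}, singleton_subset_iff.2 hM, finite_singleton M, ?_⟩⟩
  rw [hL.2.2, sUnion_singleton, univ_inter, inter_self]

end IsLSS

lemma admissible_singleton {X : Type*} {L : Set (Set X)} {U : Set X} (hU : U ∈ compatible L) :
    Admissible L {U} :=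
  ⟨singleton_subset_iff.2 hU, fun _ _ => ⟨{U}, subset_rfl, finite_singleton U, rfl⟩⟩

section Preimage

variable {X Y : Type*} {LX : Set (Set X)} {LY : Set (Set Y)} {f : X → Y}

lemma preimage_inter_eq_of_subset_preimage {A M : Set Y} {K : Set X} (hK : K ⊆ f ⁻¹' M) :
    f ⁻¹' A ∩ K = f ⁻¹' (A ∩ M) ∩ K := by
  ext x
  exact ⟨fun ⟨hA, hx⟩ => ⟨⟨hA, hK hx⟩, hx⟩, fun ⟨⟨hA, _⟩, hx⟩ => ⟨hA, hx⟩⟩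

lemma sUnion_image_preimage (f : X → Y) (V : Set (Set Y)) :
    ⋃₀ ((f ⁻¹' ·) '' V) = f ⁻¹' ⋃₀ V := by
  rw [sUnion_image, preimage_sUnion]

lemma preimage_mem_compatible (hb : BoundedMap LX LY f) (hc : ContinuousMap' LX LY f)
    {W : Set Y} (hW : W ∈ compatible LY) : f ⁻¹' W ∈ compatible LX := by
  intro L hL
  obtain ⟨M, hM, hLM⟩ := hb L hL
  rw [preimage_inter_eq_of_subset_preimage hLM]
  exact hc _ (hW M hM) L hL

lemma Admissible.preimage (hb : BoundedMap LX LY f) (hc : ContinuousMap' LX LY f)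
    {V : Set (Set Y)} (hV : Admissible LY V) : Admissible LX ((f ⁻¹' ·) '' V) := by
  refine ⟨image_subset_iff.2 fun W hW => preimage_mem_compatible hb hc (hV.1 hW), fun L hL => ?_⟩
  obtain ⟨M, hM, hLM⟩ := hb L hL
  obtain ⟨F, hFV, hF, hVF⟩ := hV.2 M hM
  refine ⟨(f ⁻¹' ·) '' F, image_mono hFV, hF.image _, ?_⟩
  rw [sUnion_image_preimage, sUnion_image_preimage, preimage_inter_eq_of_subset_preimage hLM,
    hVF, ← preimage_inter_eq_of_subset_preimage hLM]

lemma boundedMap_of_admissible_preimage (hY : IsLSS LY)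
    (h : Admissible LX ((f ⁻¹' ·) '' LY)) : BoundedMap LX LY f := by
  intro L hL
  obtain ⟨F, hFLY, hF, hLF⟩ := exists_subset_image_finite_and.1 (h.2 L hL)
  refine ⟨⋃₀ F, hY.sUnion_mem hF hFLY, fun x hx => ?_⟩
  have hxL : x ∈ ⋃₀ ((f ⁻¹' ·) '' LY) ∩ L := by
    rw [sUnion_image_preimage, hY.2.2, preimage_univ, univ_inter]
    exact hx
  rw [hLF, sUnion_image_preimage] at hxL
  exact hxL.1

end Preimage

theorem bounded_continuous_iff_strictly_continuous_general {X Y : Type*}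
    (LX : Set (Set X)) (LY : Set (Set Y))
    (hY : IsLSS LY) (f : X → Y) :
    (BoundedMap LX LY f ∧ ContinuousMap' LX LY f) ↔
      (∀ V : Set (Set Y), Admissible LY V → Admissible LX ((f ⁻¹' ·) '' V)) := by
  refine ⟨fun ⟨hb, hc⟩ _ hV => hV.preimage hb hc, fun h => ⟨?_, ?_⟩⟩
  · exact boundedMap_of_admissible_preimage hY (h LY hY.admissible_self)
  · intro M hM
    exact (h {M} (admissible_singleton (hY.subset_compatible hM))).1 ⟨M, rfl, rfl⟩

theorem bounded_continuous_iff_strictly_continuous {X Y : Type*}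
    (LX : Set (Set X)) (LY : Set (Set Y))
    (hX : IsLSS LX) (hY : IsLSS LY) (f : X → Y) :
    (BoundedMap LX LY f ∧ ContinuousMap' LX LY f) ↔
      (∀ V : Set (Set Y), Admissible LY V → Admissible LX ((f ⁻¹' ·) '' V)) :=
  bounded_continuous_iff_strictly_continuous_general LX LY hY f
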